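/- arXiv:2207.01716 — 6 statements merged into one kernel-verified Lean document; each statement's English description precedes it below -/
import Mathlib

section
/- Assume that for every s₀ ≥ 0 and every N ≥ s₀ the function t ↦ ‖U(t,s₀)‖ is bounded on the compact interval [s₀,N] (as holds when U(·,s₀) is locally of bounded variation). Then the trivial solution of the homogeneous generalized linear differential equation is globally asymptotically stable if and only if for every s₀ ≥ 0 one has ‖U(t,s₀)‖ → 0 as t → +∞. -/
open scoped Matrix.Norms.L2Operator

/-!
In finite dimension an operator is controlled by its values on a basis, so the operator norm
of `U(t,s₀)` tends to `0` as soon as every solution does; conversely `‖U(t,s₀)x₀‖ ≤ ‖U(t,s₀)‖‖x₀‖`.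
For stability, `‖U(t,s₀)‖ → 0` makes `‖U(·,s₀)‖` bounded beyond some time `N`, and the local
bound covers `[s₀, N]`; a uniform bound `M` on `[s₀, ∞)` gives stability with `δ = ε / M`.
-/

open Filter Topology

section FiniteDimensional

variable {α 𝕜 E F : Type*} [NontriviallyNormedField 𝕜] [CompleteSpace 𝕜]
  [NormedAddCommGroup E] [NormedSpace 𝕜 E] [FiniteDimensional 𝕜 E]
  [NormedAddCommGroup F] [NormedSpace 𝕜 F]

theorem ContinuousLinearMap.tendsto_norm_zero_iff_forall_tendsto_norm_apply {l : Filter α}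
    {f : α → E →L[𝕜] F} :
    Tendsto (fun a => ‖f a‖) l (𝓝 0) ↔ ∀ x, Tendsto (fun a => ‖f a x‖) l (𝓝 0) := by
  refine ⟨fun h x => ?_, fun h => ?_⟩
  · refine squeeze_zero (fun a => norm_nonneg _) (fun a => (f a).le_opNorm x) ?_
    simpa using h.mul_const ‖x‖
  · let v := Module.finBasis 𝕜 E
    obtain ⟨C, -, hC⟩ := v.exists_opNorm_le (F := F)
    have hsum : Tendsto (fun a => C * ∑ i, ‖f a (v i)‖) l (𝓝 0) := by
      simpa using (tendsto_finsetSum Finset.univ fun i _ => h (v i)).const_mul C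
    refine squeeze_zero (fun a => norm_nonneg _) (fun a => hC ?_ fun i => ?_) hsum
    · positivity
    · exact Finset.single_le_sum (f := fun i => ‖f a (v i)‖) (fun _ _ => norm_nonneg _)
        (Finset.mem_univ i)

end FiniteDimensional

theorem ContinuousLinearMap.exists_forall_norm_apply_lt_of_norm_le {ι 𝕜 E F : Type*}
    [NontriviallyNormedField 𝕜] [SeminormedAddCommGroup E] [NormedSpace 𝕜 E]
    [SeminormedAddCommGroup F] [NormedSpace 𝕜 F] {f : ι → E →L[𝕜] F} {p : ι → Prop} {M : ℝ}
    (hM : ∀ i, p i → ‖f i‖ ≤ M) {ε : ℝ} (hε : 0 < ε) :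
    ∃ δ > 0, ∀ x, ‖x‖ < δ → ∀ i, p i → ‖f i x‖ < ε := by
  set M' := max M 1
  have hM' : 0 < M' := lt_max_of_lt_right one_pos
  refine ⟨ε / M', div_pos hε hM', fun x hx i hi => ?_⟩
  calc ‖f i x‖ ≤ ‖f i‖ * ‖x‖ := (f i).le_opNorm x
    _ ≤ M' * ‖x‖ := by gcongr; exact (hM i hi).trans (le_max_left _ _)
    _ < M' * (ε / M') := by gcongr
    _ = ε := mul_div_cancel₀ ε hM'.ne'

theorem exists_forall_ge_le_of_eventually_le {g : ℝ → ℝ} {s C : ℝ}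
    (hloc : ∀ N ≥ s, ∃ B, ∀ t ∈ Set.Icc s N, g t ≤ B) (hev : ∀ᶠ t in atTop, g t ≤ C) :
    ∃ M, ∀ t ≥ s, g t ≤ M := by
  obtain ⟨N, hN⟩ := eventually_atTop.mp hev
  obtain ⟨B, hB⟩ := hloc (max N s) (le_max_right N s)
  refine ⟨max B C, fun t ht => ?_⟩
  rcases le_total t (max N s) with htN | htN
  · exact (hB t ⟨ht, htN⟩).trans (le_max_left B C)
  · exact (hN t ((le_max_left N s).trans htN)).trans (le_max_right B C)

theorem stmt_2_general (n : ℕ) (U : ℝ → ℝ → Matrix (Fin n) (Fin n) ℝ)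
    (hloc : ∀ s₀ ≥ (0 : ℝ), ∀ N ≥ s₀, ∃ B : ℝ, ∀ t ∈ Set.Icc s₀ N, ‖U t s₀‖ ≤ B) :
    ((∀ s₀ ≥ (0 : ℝ), ∀ ε > (0 : ℝ), ∃ δ > (0 : ℝ), ∀ x₀ : EuclideanSpace ℝ (Fin n),
        ‖x₀‖ < δ → ∀ t ≥ s₀, ‖Matrix.toEuclideanLin (U t s₀) x₀‖ < ε) ∧
      (∀ s₀ ≥ (0 : ℝ), ∀ x₀ : EuclideanSpace ℝ (Fin n),
        Filter.Tendsto (fun t => ‖Matrix.toEuclideanLin (U t s₀) x₀‖)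
          Filter.atTop (nhds 0))) ↔
    (∀ s₀ ≥ (0 : ℝ), Filter.Tendsto (fun t => ‖U t s₀‖) Filter.atTop (nhds 0)) := by
  have hsolutions (s₀ : ℝ) := ContinuousLinearMap.tendsto_norm_zero_iff_forall_tendsto_norm_apply
    (l := atTop) (f := fun t => Matrix.toEuclideanCLM (n := Fin n) (𝕜 := ℝ) (U t s₀))
  constructor
  · rintro ⟨-, hattr⟩ s₀ hs₀
    exact (hsolutions s₀).2 (hattr s₀ hs₀)
  · intro h
    refine ⟨fun s₀ hs₀ ε hε => ?_, fun s₀ hs₀ => (hsolutions s₀).1 (h s₀ hs₀)⟩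
    obtain ⟨M, hM⟩ := exists_forall_ge_le_of_eventually_le (hloc s₀ hs₀)
      ((h s₀ hs₀).eventually (ge_mem_nhds zero_lt_one))
    exact ContinuousLinearMap.exists_forall_norm_apply_lt_of_norm_le
      (f := fun t => Matrix.toEuclideanCLM (n := Fin n) (𝕜 := ℝ) (U t s₀)) hM hε

/-- Assuming `t ↦ ‖U(t,s₀)‖` is bounded on every compact interval `[s₀, N]`, the trivial
solution of the homogeneous GLDE is globally asymptotically stable (stable, and every solution
tends to `0`) if and only if `‖U(t,s₀)‖ → 0` as `t → +∞`, for every `s₀ ≥ 0`. -/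
theorem stmt_2 (n : ℕ) (hn : 0 < n) (U : ℝ → ℝ → Matrix (Fin n) (Fin n) ℝ)
    (hloc : ∀ s₀ ≥ (0 : ℝ), ∀ N ≥ s₀, ∃ B : ℝ, ∀ t ∈ Set.Icc s₀ N, ‖U t s₀‖ ≤ B) :
    ((∀ s₀ ≥ (0 : ℝ), ∀ ε > (0 : ℝ), ∃ δ > (0 : ℝ), ∀ x₀ : EuclideanSpace ℝ (Fin n),
        ‖x₀‖ < δ → ∀ t ≥ s₀, ‖Matrix.toEuclideanLin (U t s₀) x₀‖ < ε) ∧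
      (∀ s₀ ≥ (0 : ℝ), ∀ x₀ : EuclideanSpace ℝ (Fin n),
        Filter.Tendsto (fun t => ‖Matrix.toEuclideanLin (U t s₀) x₀‖)
          Filter.atTop (nhds 0))) ↔
    (∀ s₀ ≥ (0 : ℝ), Filter.Tendsto (fun t => ‖U t s₀‖) Filter.atTop (nhds 0)) :=
  stmt_2_general n U hloc
end

section
/- Assume U satisfies the cocycle (transition) property. Then the trivial solution of the homogeneous generalized linear differential equation is uniformly asymptotically stable if and only if there exist positive constants K, α > 0 such that ‖U(t,s₀)‖ ≤ K e^{-α(t-s₀)} for all t ≥ s₀ ≥ 0. -/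
/-!
Uniform stability bounds `‖U t s‖` by a constant `M`, and uniform attraction makes
`‖U t s‖ ≤ 1/2` once `t - s ≥ T`. Cutting `[s, t]` into `⌊(t - s)/T⌋` blocks of length `T`, the
cocycle property and submultiplicativity of the norm give
`‖U t s‖ ≤ M 2^(-⌊(t - s)/T⌋) ≤ 2M exp(-(log 2 / T)(t - s))`. Conversely, an exponential bound is
in particular a uniform bound, and it tends to zero uniformly in `s`.
-/

open scoped Matrix.Norms.L2Operator

open Filter Topology

section ContractingCocycle

variable {R : Type*} [NormedRing R] {U : ℝ → ℝ → R}

theorem norm_le_mul_pow_of_contracting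
    (hcoc : ∀ s r t : ℝ, 0 ≤ s → s ≤ r → r ≤ t → U t s = U t r * U r s)
    {M q T : ℝ} (hT : 0 ≤ T) (hM : ∀ s ≥ (0 : ℝ), ∀ t ≥ s, ‖U t s‖ ≤ M)
    (hcontr : ∀ s ≥ (0 : ℝ), ∀ t ≥ s + T, ‖U t s‖ ≤ q) (m : ℕ) :
    ∀ s ≥ (0 : ℝ), ∀ t ≥ s + m * T, ‖U t s‖ ≤ M * q ^ m := by
  induction m with
  | zero => exact fun s hs t ht => by simpa using hM s hs t (by simpa using ht)
  | succ m ih =>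
    intro s hs t ht
    have hmT : 0 ≤ (m : ℝ) * T := by positivity
    push_cast at ht
    have htail := ih (s + T) (by linarith) t (by linarith)
    calc ‖U t s‖ = ‖U t (s + T) * U (s + T) s‖ := by
          rw [← hcoc s (s + T) t hs (by linarith) (by nlinarith)]
      _ ≤ ‖U t (s + T)‖ * ‖U (s + T) s‖ := norm_mul_le _ _
      _ ≤ M * q ^ m * q :=
          mul_le_mul htail (hcontr s hs _ le_rfl) (norm_nonneg _) ((norm_nonneg _).trans htail)
      _ = M * q ^ (m + 1) := by ring

theorem norm_le_exp_of_contracting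
    (hcoc : ∀ s r t : ℝ, 0 ≤ s → s ≤ r → r ≤ t → U t s = U t r * U r s)
    {M q T : ℝ} (hq₀ : 0 < q) (hq₁ : q < 1) (hT : 0 < T)
    (hM : ∀ s ≥ (0 : ℝ), ∀ t ≥ s, ‖U t s‖ ≤ M)
    (hcontr : ∀ s ≥ (0 : ℝ), ∀ t ≥ s + T, ‖U t s‖ ≤ q) :
    ∀ s ≥ (0 : ℝ), ∀ t ≥ s, ‖U t s‖ ≤ M / q * Real.exp (-(Real.log q⁻¹ / T) * (t - s)) := by
  intro s hs t ht
  set m := ⌊(t - s) / T⌋₊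
  have hm_le : (m : ℝ) * T ≤ t - s :=
    (le_div_iff₀ hT).1 (Nat.floor_le (div_nonneg (by linarith) hT.le))
  have hm_ge : (t - s) / T - 1 ≤ m := by linarith [Nat.lt_floor_add_one ((t - s) / T)]
  have hpow : q ^ m ≤ q⁻¹ * Real.exp (-(Real.log q⁻¹ / T) * (t - s)) := by
    have hexponent : ((t - s) / T - 1) * Real.log q
        = -Real.log q + -(-Real.log q / T) * (t - s) := by
      field_simp; ring
    calc q ^ m = Real.exp (m * Real.log q) := by rw [Real.exp_nat_mul, Real.exp_log hq₀]
      _ ≤ Real.exp (((t - s) / T - 1) * Real.log q) :=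
          Real.exp_le_exp.2 (mul_le_mul_of_nonpos_right hm_ge (Real.log_nonpos hq₀.le hq₁.le))
      _ = q⁻¹ * Real.exp (-(Real.log q⁻¹ / T) * (t - s)) := by
          rw [hexponent, Real.exp_add, Real.exp_neg, Real.exp_log hq₀, Real.log_inv]
  have hM₀ : 0 ≤ M := (norm_nonneg _).trans (hM s hs s le_rfl)
  calc ‖U t s‖ ≤ M * q ^ m :=
        norm_le_mul_pow_of_contracting hcoc hT.le hM hcontr m s hs t (by linarith)
    _ ≤ M * (q⁻¹ * Real.exp (-(Real.log q⁻¹ / T) * (t - s))) := by gcongr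
    _ = M / q * Real.exp (-(Real.log q⁻¹ / T) * (t - s)) := by ring

end ContractingCocycle

namespace Matrix

variable {ι : Type*} [Fintype ι] [DecidableEq ι]

theorem l2_opNorm_toEuclideanLin_apply_le (A : Matrix ι ι ℝ) (x : EuclideanSpace ℝ ι) :
    ‖toEuclideanLin A x‖ ≤ ‖A‖ * ‖x‖ :=
  (toEuclideanCLM (𝕜 := ℝ) A).le_opNorm x

theorem l2_opNorm_le_of_ball (A : Matrix ι ι ℝ) {δ ε : ℝ} (hδ : 0 < δ)
    (h : ∀ x : EuclideanSpace ℝ ι, ‖x‖ < δ → ‖toEuclideanLin A x‖ ≤ ε) :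
    ‖A‖ ≤ 2 * ε / δ := by
  have hε : 0 ≤ ε := (norm_nonneg _).trans (h 0 (by simpa using hδ))
  refine ContinuousLinearMap.opNorm_le_of_unit_norm (f := toEuclideanCLM (𝕜 := ℝ) A)
    (by positivity) fun x hx => ?_
  have hδ2 : ‖δ / 2‖ = δ / 2 := Real.norm_of_nonneg (by positivity)
  have hscaled := h ((δ / 2) • x) (by rw [norm_smul, hx, hδ2]; linarith)
  rw [map_smul, norm_smul, hδ2] at hscaled
  rw [le_div_iff₀ hδ]
  change ‖toEuclideanLin A x‖ * δ ≤ 2 * ε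
  linarith

end Matrix

section Stability

variable {ι : Type*} [Fintype ι] [DecidableEq ι] (U : ℝ → ℝ → Matrix ι ι ℝ)

def IsUniformlyStable : Prop :=
  ∀ ε > (0 : ℝ), ∃ δ > (0 : ℝ), ∀ s₀ ≥ (0 : ℝ), ∀ x₀ : EuclideanSpace ℝ ι,
    ‖x₀‖ < δ → ∀ t ≥ s₀, ‖Matrix.toEuclideanLin (U t s₀) x₀‖ < ε

/-- Uniform asymptotic stability is `IsUniformlyStable U ∧ IsUniformlyAttracting U`. -/
def IsUniformlyAttracting : Prop :=
  ∃ δ₀ > (0 : ℝ), ∀ ε > (0 : ℝ), ∃ T ≥ (0 : ℝ), ∀ s₀ ≥ (0 : ℝ),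
    ∀ x₀ : EuclideanSpace ℝ ι, ‖x₀‖ < δ₀ →
      ∀ t ≥ s₀ + T, ‖Matrix.toEuclideanLin (U t s₀) x₀‖ < ε

def IsExponentiallyStable : Prop :=
  ∃ K > (0 : ℝ), ∃ α > (0 : ℝ), ∀ s₀ ≥ (0 : ℝ), ∀ t ≥ s₀,
    ‖U t s₀‖ ≤ K * Real.exp (-α * (t - s₀))

variable {U}

theorem IsExponentiallyStable.isUniformlyStable (h : IsExponentiallyStable U) :
    IsUniformlyStable U := by
  obtain ⟨K, hK, α, hα, hU⟩ := h
  intro ε hε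
  refine ⟨ε / K, by positivity, fun s hs x hx t ht => ?_⟩
  have hUK : ‖U t s‖ ≤ K :=
    (hU s hs t ht).trans (mul_le_of_le_one_right hK.le (Real.exp_le_one_iff.2 (by nlinarith)))
  calc ‖Matrix.toEuclideanLin (U t s) x‖ ≤ ‖U t s‖ * ‖x‖ :=
        Matrix.l2_opNorm_toEuclideanLin_apply_le _ _
    _ ≤ K * ‖x‖ := by gcongr
    _ < ε := by rwa [lt_div_iff₀' hK] at hx

theorem IsExponentiallyStable.isUniformlyAttracting (h : IsExponentiallyStable U) :
    IsUniformlyAttracting U := by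
  obtain ⟨K, -, α, hα, hU⟩ := h
  refine ⟨1, one_pos, fun ε hε => ?_⟩
  have hdecay : Tendsto (fun τ => K * Real.exp (-α * τ)) atTop (𝓝 0) := by
    simpa using (Real.tendsto_exp_atBot.comp
      (tendsto_id.const_mul_atTop_of_neg (neg_neg_of_pos hα))).const_mul K
  obtain ⟨T, hT⟩ := eventually_atTop.1 (hdecay.eventually (gt_mem_nhds hε))
  refine ⟨max T 0, le_max_right _ _, fun s hs x hx t ht => ?_⟩
  calc ‖Matrix.toEuclideanLin (U t s) x‖ ≤ ‖U t s‖ * ‖x‖ :=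
        Matrix.l2_opNorm_toEuclideanLin_apply_le _ _
    _ ≤ ‖U t s‖ := mul_le_of_le_one_right (norm_nonneg _) hx.le
    _ ≤ K * Real.exp (-α * (t - s)) := hU s hs t (by linarith [le_max_right T 0])
    _ < ε := hT _ (by linarith [le_max_left T 0])

theorem IsUniformlyStable.isExponentiallyStable
    (hcoc : ∀ s r t : ℝ, 0 ≤ s → s ≤ r → r ≤ t → U t s = U t r * U r s)
    (hstab : IsUniformlyStable U) (hattr : IsUniformlyAttracting U) :
    IsExponentiallyStable U := by
  obtain ⟨δ, hδ, hbdd⟩ := hstab 1 one_pos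
  obtain ⟨δ₀, hδ₀, hsmall⟩ := hattr
  obtain ⟨T, -, hT⟩ := hsmall (δ₀ / 4) (by positivity)
  have hM : ∀ s ≥ (0 : ℝ), ∀ t ≥ s, ‖U t s‖ ≤ 2 / δ := fun s hs t ht => by
    simpa using Matrix.l2_opNorm_le_of_ball _ hδ fun x hx => (hbdd s hs x hx t ht).le
  have hcontr : ∀ s ≥ (0 : ℝ), ∀ t ≥ s + max T 1, ‖U t s‖ ≤ 1 / 2 := fun s hs t ht => by
    have := Matrix.l2_opNorm_le_of_ball _ hδ₀ fun x hx =>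
      (hT s hs x hx t (by linarith [le_max_left T 1])).le
    rwa [show 2 * (δ₀ / 4) / δ₀ = 1 / 2 by field_simp; ring] at this
  have hrate : 0 < Real.log (1 / 2 : ℝ)⁻¹ / max T 1 :=
    div_pos (Real.log_pos (by norm_num)) (lt_max_of_lt_right one_pos)
  exact ⟨_, by positivity, _, hrate, norm_le_exp_of_contracting hcoc (by norm_num) (by norm_num)
    (lt_max_of_lt_right one_pos) hM hcontr⟩

end Stability

theorem stmt_3_general (n : ℕ) (U : ℝ → ℝ → Matrix (Fin n) (Fin n) ℝ)
    (hcoc : ∀ s r t : ℝ, 0 ≤ s → s ≤ r → r ≤ t → U t s = U t r * U r s) :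
    ((∀ ε > (0 : ℝ), ∃ δ > (0 : ℝ), ∀ s₀ ≥ (0 : ℝ), ∀ x₀ : EuclideanSpace ℝ (Fin n),
        ‖x₀‖ < δ → ∀ t ≥ s₀, ‖Matrix.toEuclideanLin (U t s₀) x₀‖ < ε) ∧
      (∃ δ₀ > (0 : ℝ), ∀ ε > (0 : ℝ), ∃ T ≥ (0 : ℝ), ∀ s₀ ≥ (0 : ℝ),
        ∀ x₀ : EuclideanSpace ℝ (Fin n), ‖x₀‖ < δ₀ →
          ∀ t ≥ s₀ + T, ‖Matrix.toEuclideanLin (U t s₀) x₀‖ < ε)) ↔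
    (∃ K > (0 : ℝ), ∃ α > (0 : ℝ), ∀ s₀ ≥ (0 : ℝ), ∀ t ≥ s₀,
      ‖U t s₀‖ ≤ K * Real.exp (-α * (t - s₀))) :=
  ⟨fun h => IsUniformlyStable.isExponentiallyStable hcoc h.1 h.2,
    fun h => ⟨IsExponentiallyStable.isUniformlyStable h,
      IsExponentiallyStable.isUniformlyAttracting h⟩⟩

/-- Assuming the cocycle property, the trivial solution of the homogeneous GLDE is uniformly
asymptotically stable if and only if there are `K, α > 0` with
`‖U(t,s₀)‖ ≤ K e^{-α (t - s₀)}` for all `t ≥ s₀ ≥ 0`. -/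
theorem stmt_3 (n : ℕ) (hn : 0 < n) (U : ℝ → ℝ → Matrix (Fin n) (Fin n) ℝ)
    (hid : ∀ t ≥ (0 : ℝ), U t t = 1)
    (hcoc : ∀ s r t : ℝ, 0 ≤ s → s ≤ r → r ≤ t → U t s = U t r * U r s) :
    ((∀ ε > (0 : ℝ), ∃ δ > (0 : ℝ), ∀ s₀ ≥ (0 : ℝ), ∀ x₀ : EuclideanSpace ℝ (Fin n),
        ‖x₀‖ < δ → ∀ t ≥ s₀, ‖Matrix.toEuclideanLin (U t s₀) x₀‖ < ε) ∧
      (∃ δ₀ > (0 : ℝ), ∀ ε > (0 : ℝ), ∃ T ≥ (0 : ℝ), ∀ s₀ ≥ (0 : ℝ),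
        ∀ x₀ : EuclideanSpace ℝ (Fin n), ‖x₀‖ < δ₀ →
          ∀ t ≥ s₀ + T, ‖Matrix.toEuclideanLin (U t s₀) x₀‖ < ε)) ↔
    (∃ K > (0 : ℝ), ∃ α > (0 : ℝ), ∀ s₀ ≥ (0 : ℝ), ∀ t ≥ s₀,
      ‖U t s₀‖ ≤ K * Real.exp (-α * (t - s₀))) :=
  stmt_3_general n U hcoc
end

section
/- Assume U satisfies the cocycle (transition) property. Then the trivial solution of the homogeneous generalized linear differential equation is uniformly asymptotically stable if and only if it is globally uniformly exponentially stable. -/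
/-!
Uniform stability bounds every transition operator `Φ t s` by a constant `M`, and uniform
attractivity yields a time `T > 0` after which `‖Φ t s‖ ≤ e⁻¹`. Splitting `[s, t]` into steps of
length `T`, the cocycle property gives `‖Φ t s‖ ≤ M e⁻ᵐ` whenever `t ≥ s + m T`, which is
exponential decay at rate `1 / T`. The converse implication needs no structure at all.
-/

open Real

section Cocycle

variable {R : Type*} [SeminormedRing R]

def IsCocycle (Φ : ℝ → ℝ → R) : Prop :=
  ∀ s r t : ℝ, 0 ≤ s → s ≤ r → r ≤ t → Φ t s = Φ t r * Φ r s

variable {Φ : ℝ → ℝ → R}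

theorem IsCocycle.norm_le_mul_pow (hΦ : IsCocycle Φ) {M q T : ℝ} (hT : 0 ≤ T)
    (hM : ∀ s ≥ 0, ∀ t ≥ s, ‖Φ t s‖ ≤ M) (hq : ∀ s ≥ 0, ∀ t ≥ s + T, ‖Φ t s‖ ≤ q) (m : ℕ) :
    ∀ s ≥ 0, ∀ t ≥ s + m * T, ‖Φ t s‖ ≤ M * q ^ m := by
  induction m with
  | zero => simpa using hM
  | succ m ih =>
    intro s hs t ht
    have hmT : 0 ≤ (m : ℝ) * T := by positivity
    have ht' : t ≥ (s + T) + m * T := by push_cast at ht; linarith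
    have hrest := ih (s + T) (by linarith) t ht'
    calc ‖Φ t s‖ = ‖Φ t (s + T) * Φ (s + T) s‖ := by
          rw [← hΦ s (s + T) t hs (by linarith) (by linarith)]
      _ ≤ ‖Φ t (s + T)‖ * ‖Φ (s + T) s‖ := norm_mul_le _ _
      _ ≤ M * q ^ m * q :=
        mul_le_mul hrest (hq s hs (s + T) le_rfl) (norm_nonneg _) ((norm_nonneg _).trans hrest)
      _ = M * q ^ (m + 1) := by ring

theorem IsCocycle.norm_le_mul_exp (hΦ : IsCocycle Φ) {M T : ℝ} (hT : 0 < T)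
    (hM : ∀ s ≥ 0, ∀ t ≥ s, ‖Φ t s‖ ≤ M) (hq : ∀ s ≥ 0, ∀ t ≥ s + T, ‖Φ t s‖ ≤ exp (-1)) :
    ∀ s ≥ 0, ∀ t ≥ s, ‖Φ t s‖ ≤ M * exp 1 * exp (-T⁻¹ * (t - s)) := by
  intro s hs t ht
  have hM₀ : 0 ≤ M := (norm_nonneg _).trans (hM 0 le_rfl 0 le_rfl)
  set m := ⌊(t - s) / T⌋₊
  have hm_le : (m : ℝ) * T ≤ t - s :=
    (le_div_iff₀ hT).mp (Nat.floor_le (div_nonneg (sub_nonneg.mpr ht) hT.le))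
  have hm_gt : (t - s) / T < m + 1 := Nat.lt_floor_add_one _
  calc ‖Φ t s‖ ≤ M * exp (-1) ^ m := hΦ.norm_le_mul_pow hT.le hM hq m s hs t (by linarith)
    _ = M * exp (-m) := by rw [← exp_nat_mul]; ring_nf
    _ ≤ M * exp (1 + -T⁻¹ * (t - s)) := by
      gcongr
      rw [neg_mul, ← div_eq_inv_mul]
      linarith
    _ = M * exp 1 * exp (-T⁻¹ * (t - s)) := by rw [exp_add, mul_assoc]

end Cocycle

theorem ContinuousLinearMap.opNorm_le_of_norm_lt {𝕜 E F : Type*} [RCLike 𝕜]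
    [NormedAddCommGroup E] [NormedSpace 𝕜 E] [NormedAddCommGroup F] [NormedSpace 𝕜 F]
    (f : E →L[𝕜] F) {δ ε : ℝ} (hδ : 0 < δ) (h : ∀ x, ‖x‖ < δ → ‖f x‖ < ε) :
    ‖f‖ ≤ 2 * ε / δ := by
  have hε : 0 < ε := by simpa using h 0 (by simpa using hδ)
  have h2 : 1 < ‖(2 : 𝕜)‖ := by rw [RCLike.norm_two]; norm_num
  refine f.opNorm_le_of_shell hδ (by positivity) h2 fun x hx hxδ => ?_
  rw [RCLike.norm_two] at hx
  calc ‖f x‖ ≤ ε := (h x hxδ).le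
    _ = 2 * ε / δ * (δ / 2) := by field_simp
    _ ≤ 2 * ε / δ * ‖x‖ := by gcongr

section Stability

variable {𝕜 E : Type*} [RCLike 𝕜] [NormedAddCommGroup E] [NormedSpace 𝕜 E]

def UniformlyStable (Φ : ℝ → ℝ → E →L[𝕜] E) : Prop :=
  ∀ ε > (0 : ℝ), ∃ δ > (0 : ℝ), ∀ s ≥ (0 : ℝ), ∀ x : E, ‖x‖ < δ → ∀ t ≥ s, ‖Φ t s x‖ < ε

def UniformlyAttracting (Φ : ℝ → ℝ → E →L[𝕜] E) : Prop :=
  ∃ δ₀ > (0 : ℝ), ∀ ε > (0 : ℝ), ∃ T ≥ (0 : ℝ), ∀ s ≥ (0 : ℝ), ∀ x : E, ‖x‖ < δ₀ →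
    ∀ t ≥ s + T, ‖Φ t s x‖ < ε

def UniformlyAsymptoticallyStable (Φ : ℝ → ℝ → E →L[𝕜] E) : Prop :=
  UniformlyStable Φ ∧ UniformlyAttracting Φ

def UniformlyExponentiallyStable (Φ : ℝ → ℝ → E →L[𝕜] E) : Prop :=
  ∃ K > (0 : ℝ), ∃ α > (0 : ℝ), ∀ x : E, ∀ s ≥ (0 : ℝ), ∀ t ≥ s,
    ‖Φ t s x‖ ≤ K * ‖x‖ * exp (-α * (t - s))

variable {Φ : ℝ → ℝ → E →L[𝕜] E}

theorem UniformlyStable.exists_opNorm_le (h : UniformlyStable Φ) :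
    ∃ M > 0, ∀ s ≥ 0, ∀ t ≥ s, ‖Φ t s‖ ≤ M := by
  obtain ⟨δ, hδ, hbound⟩ := h 1 one_pos
  exact ⟨2 * 1 / δ, by positivity, fun s hs t ht =>
    (Φ t s).opNorm_le_of_norm_lt hδ fun x hx => hbound s hs x hx t ht⟩

theorem UniformlyAttracting.exists_opNorm_le (h : UniformlyAttracting Φ) {q : ℝ} (hq : 0 < q) :
    ∃ T ≥ 0, ∀ s ≥ 0, ∀ t ≥ s + T, ‖Φ t s‖ ≤ q := by
  obtain ⟨δ₀, hδ₀, hattr⟩ := h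
  obtain ⟨T, hT, hbound⟩ := hattr (q * δ₀ / 2) (by positivity)
  refine ⟨T, hT, fun s hs t ht => ?_⟩
  calc ‖Φ t s‖ ≤ 2 * (q * δ₀ / 2) / δ₀ :=
        (Φ t s).opNorm_le_of_norm_lt hδ₀ fun x hx => hbound s hs x hx t ht
    _ = q := by field_simp

theorem UniformlyAsymptoticallyStable.uniformlyExponentiallyStable (hΦ : IsCocycle Φ)
    (h : UniformlyAsymptoticallyStable Φ) : UniformlyExponentiallyStable Φ := by
  obtain ⟨M, hM, hMbound⟩ := h.1.exists_opNorm_le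
  obtain ⟨T, hT, hTbound⟩ := h.2.exists_opNorm_le (exp_pos (-1))
  have hdecay := hΦ.norm_le_mul_exp (T := T + 1) (by linarith) hMbound
    fun s hs t ht => hTbound s hs t (by linarith)
  refine ⟨M * exp 1, by positivity, (T + 1)⁻¹, by positivity, fun x s hs t ht => ?_⟩
  rw [mul_right_comm]
  exact (Φ t s).le_of_opNorm_le (hdecay s hs t ht) x

namespace UniformlyExponentiallyStable

theorem uniformlyStable (h : UniformlyExponentiallyStable Φ) : UniformlyStable Φ := by
  obtain ⟨K, hK, α, hα, hbound⟩ := h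
  refine fun ε hε => ⟨ε / K, by positivity, fun s hs x hx t ht => ?_⟩
  have hexp : exp (-α * (t - s)) ≤ 1 :=
    exp_le_one_iff.mpr (mul_nonpos_of_nonpos_of_nonneg (by linarith) (by linarith))
  calc ‖Φ t s x‖ ≤ K * ‖x‖ * exp (-α * (t - s)) := hbound x s hs t ht
    _ ≤ K * ‖x‖ := mul_le_of_le_one_right (by positivity) hexp
    _ < ε := (lt_div_iff₀' hK).mp hx

theorem uniformlyAttracting (h : UniformlyExponentiallyStable Φ) : UniformlyAttracting Φ := by
  obtain ⟨K, hK, α, hα, hbound⟩ := h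
  refine ⟨1, one_pos, fun ε hε => ⟨max 0 (log (K / ε) / α), le_max_left _ _,
    fun s hs x hx t ht => ?_⟩⟩
  have hlog : log (K / ε) ≤ α * (t - s) := by
    have := (div_le_iff₀' hα).mp (le_max_right 0 (log (K / ε) / α))
    nlinarith
  calc ‖Φ t s x‖ ≤ K * ‖x‖ * exp (-α * (t - s)) :=
        hbound x s hs t (by linarith [le_max_left 0 (log (K / ε) / α)])
    _ < K * 1 * exp (-α * (t - s)) := by gcongr
    _ ≤ K * 1 * exp (-log (K / ε)) := by gcongr; linarith
    _ = ε := by rw [exp_neg, exp_log (by positivity)]; field_simp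

theorem uniformlyAsymptoticallyStable (h : UniformlyExponentiallyStable Φ) :
    UniformlyAsymptoticallyStable Φ :=
  ⟨h.uniformlyStable, h.uniformlyAttracting⟩

end UniformlyExponentiallyStable

theorem uniformlyAsymptoticallyStable_iff_uniformlyExponentiallyStable (hΦ : IsCocycle Φ) :
    UniformlyAsymptoticallyStable Φ ↔ UniformlyExponentiallyStable Φ :=
  ⟨fun h => h.uniformlyExponentiallyStable hΦ, fun h => h.uniformlyAsymptoticallyStable⟩

end Stability

theorem stmt_5_general (n : ℕ) (U : ℝ → ℝ → Matrix (Fin n) (Fin n) ℝ)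
    (hcoc : ∀ s r t : ℝ, 0 ≤ s → s ≤ r → r ≤ t → U t s = U t r * U r s) :
    ((∀ ε > (0 : ℝ), ∃ δ > (0 : ℝ), ∀ s₀ ≥ (0 : ℝ), ∀ x₀ : EuclideanSpace ℝ (Fin n),
        ‖x₀‖ < δ → ∀ t ≥ s₀, ‖Matrix.toEuclideanLin (U t s₀) x₀‖ < ε) ∧
      (∃ δ₀ > (0 : ℝ), ∀ ε > (0 : ℝ), ∃ T ≥ (0 : ℝ), ∀ s₀ ≥ (0 : ℝ),
        ∀ x₀ : EuclideanSpace ℝ (Fin n), ‖x₀‖ < δ₀ →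
          ∀ t ≥ s₀ + T, ‖Matrix.toEuclideanLin (U t s₀) x₀‖ < ε)) ↔
    (∃ K > (0 : ℝ), ∃ α > (0 : ℝ), ∀ x₀ : EuclideanSpace ℝ (Fin n), ∀ s₀ ≥ (0 : ℝ),
      ∀ t ≥ s₀, ‖Matrix.toEuclideanLin (U t s₀) x₀‖ ≤
        K * ‖x₀‖ * Real.exp (-α * (t - s₀))) := by
  have hΦ : IsCocycle fun t s => Matrix.toEuclideanCLM (𝕜 := ℝ) (U t s) :=
    fun s r t hs hsr hrt => by simp only [hcoc s r t hs hsr hrt, map_mul]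
  have hcoe : ∀ (A : Matrix (Fin n) (Fin n) ℝ) (x : EuclideanSpace ℝ (Fin n)),
      Matrix.toEuclideanCLM (𝕜 := ℝ) A x = Matrix.toEuclideanLin A x := fun _ _ => rfl
  simpa only [UniformlyAsymptoticallyStable, UniformlyStable, UniformlyAttracting,
    UniformlyExponentiallyStable, hcoe] using
    uniformlyAsymptoticallyStable_iff_uniformlyExponentiallyStable hΦ

/-- Assuming the cocycle property, the trivial solution of the homogeneous GLDE is uniformly
asymptotically stable if and only if it is globally uniformly exponentially stable. -/
theorem stmt_5 (n : ℕ) (hn : 0 < n) (U : ℝ → ℝ → Matrix (Fin n) (Fin n) ℝ)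
    (hid : ∀ t ≥ (0 : ℝ), U t t = 1)
    (hcoc : ∀ s r t : ℝ, 0 ≤ s → s ≤ r → r ≤ t → U t s = U t r * U r s) :
    ((∀ ε > (0 : ℝ), ∃ δ > (0 : ℝ), ∀ s₀ ≥ (0 : ℝ), ∀ x₀ : EuclideanSpace ℝ (Fin n),
        ‖x₀‖ < δ → ∀ t ≥ s₀, ‖Matrix.toEuclideanLin (U t s₀) x₀‖ < ε) ∧
      (∃ δ₀ > (0 : ℝ), ∀ ε > (0 : ℝ), ∃ T ≥ (0 : ℝ), ∀ s₀ ≥ (0 : ℝ),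
        ∀ x₀ : EuclideanSpace ℝ (Fin n), ‖x₀‖ < δ₀ →
          ∀ t ≥ s₀ + T, ‖Matrix.toEuclideanLin (U t s₀) x₀‖ < ε)) ↔
    (∃ K > (0 : ℝ), ∃ α > (0 : ℝ), ∀ x₀ : EuclideanSpace ℝ (Fin n), ∀ s₀ ≥ (0 : ℝ),
      ∀ t ≥ s₀, ‖Matrix.toEuclideanLin (U t s₀) x₀‖ ≤
        K * ‖x₀‖ * Real.exp (-α * (t - s₀))) :=
  stmt_5_general n U hcoc
end

section
/- Let ω > 0. Assume U satisfies the cocycle (transition) property, is ω-periodic in the sense that U(t+ω, s+ω) = U(t,s) for all t ≥ s ≥ 0, and that there exists M > 0 with ‖U(t,s)‖ ≤ M for all 0 ≤ s ≤ t ≤ ω. If every complex eigenvalue μ of the monodromy matrix U(ω,0) (regarded as a matrix over ℂ) satisfies |μ| < 1, then there exist constants K, α > 0 such that ‖U(t,s)‖ ≤ K e^{-α(t-s)} for all t ≥ s ≥ 0; in particular the trivial solution of the homogeneous generalized linear differential equation is globally uniformly exponentially stable. -/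
open scoped Matrix.Norms.L2Operator Matrix
open Filter

/-! Gelfand's formula turns the spectral condition into geometric decay `‖Cᵏ‖ ≤ c ρᵏ`, `ρ < 1`, of
the powers of the monodromy matrix `C = U(ω,0)`; the operator norm of a real matrix is at most
that of its complexification, so the bound transfers back to `ℝ`. Periodicity and the cocycle
property give `U((j+k)ω, jω) = Cᵏ`. Unless `s` and `t` lie in one period, factoring `U(t,s)`
through `(⌊s/ω⌋ + 1)ω ≤ ⌊t/ω⌋ω` leaves two pieces inside single periods, each bounded by `M`,
around a power `Cᵏ` with `t - s < (k+2)ω`; hence `‖U(t,s)‖` decays like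
`exp (-(log ρ⁻¹ / ω) (t - s))`. -/

theorem exists_norm_pow_le_mul_pow_of_spectralRadius_lt_one {A : Type*} [NormedRing A]
    [NormedAlgebra ℂ A] [CompleteSpace A] {a : A} (ha : spectralRadius ℂ a < 1) :
    ∃ c > (0 : ℝ), ∃ ρ : ℝ, 0 < ρ ∧ ρ < 1 ∧ ∀ k : ℕ, ‖a ^ k‖ ≤ c * ρ ^ k := by
  obtain ⟨ρ, hρa, hρ1⟩ := ENNReal.lt_iff_exists_nnreal_btwn.mp ha
  have hρ0 : (0 : ℝ) < ρ := ENNReal.coe_pos.mp (lt_of_le_of_lt zero_le hρa)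
  have hρ1' : (ρ : ℝ) < 1 := by exact_mod_cast hρ1
  have h_eventually : ∀ᶠ k : ℕ in atTop, ‖a ^ k‖ / (ρ : ℝ) ^ k ≤ 1 := by
    have hgelfand := spectrum.pow_nnnorm_pow_one_div_tendsto_nhds_spectralRadius a
    filter_upwards [hgelfand.eventually_lt_const hρa, eventually_gt_atTop 0] with k hk hk0
    rw [one_div, ENNReal.rpow_inv_lt_iff (by positivity), ENNReal.rpow_natCast] at hk
    rw [div_le_one (by positivity)]
    exact_mod_cast hk.le
  obtain ⟨c, hc⟩ := (isBoundedUnder_of_eventually_le h_eventually).bddAbove_range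
  refine ⟨max c 1, by positivity, ρ, hρ0, hρ1', fun k => ?_⟩
  rw [← div_le_iff₀ (by positivity)]
  exact (hc ⟨k, rfl⟩).trans (le_max_left _ _)

theorem EuclideanSpace.norm_toLp_ofReal {n : Type*} [Fintype n] (v : n → ℝ) :
    ‖WithLp.toLp 2 (fun i => (v i : ℂ))‖ = ‖WithLp.toLp 2 v‖ := by
  simp [EuclideanSpace.norm_eq]

theorem Matrix.l2_opNorm_le_l2_opNorm_map_ofReal {m n : Type*} [Fintype m] [Fintype n]
    [DecidableEq n] (B : Matrix m n ℝ) : ‖B‖ ≤ ‖B.map ((↑) : ℝ → ℂ)‖ := by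
  refine ContinuousLinearMap.opNorm_le_bound _ (norm_nonneg _) fun x => ?_
  have h := (B.map ((↑) : ℝ → ℂ)).l2_opNorm_mulVec (WithLp.toLp 2 fun i => (x i : ℂ))
  have hmap : B.map ((↑) : ℝ → ℂ) *ᵥ (fun i => (x i : ℂ)) = fun i => ((B *ᵥ x.ofLp) i : ℂ) :=
    funext fun i => (RingHom.map_mulVec Complex.ofRealHom B x.ofLp i).symm
  rw [EuclideanSpace.norm_toLp_ofReal, WithLp.ofLp_toLp, hmap] at h
  change ‖WithLp.toLp 2 _‖ ≤ _ at h
  rwa [EuclideanSpace.norm_toLp_ofReal] at h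

theorem Matrix.exists_norm_pow_le_mul_pow_of_spectrum_map_ofReal {n : Type*} [Fintype n]
    [DecidableEq n] [Nonempty n] (C : Matrix n n ℝ)
    (hC : ∀ μ ∈ spectrum ℂ (C.map ((↑) : ℝ → ℂ)), ‖μ‖ < 1) :
    ∃ c > (0 : ℝ), ∃ ρ : ℝ, 0 < ρ ∧ ρ < 1 ∧ ∀ k : ℕ, ‖C ^ k‖ ≤ c * ρ ^ k := by
  have hradius : spectralRadius ℂ (C.map ((↑) : ℝ → ℂ)) < 1 := by
    simpa using spectrum.spectralRadius_lt_of_forall_lt (C.map ((↑) : ℝ → ℂ)) (r := 1)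
      fun z hz => by simpa [← NNReal.coe_lt_coe] using hC z hz
  obtain ⟨c, hc, ρ, hρ0, hρ1, hpow⟩ := exists_norm_pow_le_mul_pow_of_spectralRadius_lt_one hradius
  refine ⟨c, hc, ρ, hρ0, hρ1, fun k => ?_⟩
  have hmap : (C ^ k).map ((↑) : ℝ → ℂ) = C.map (↑) ^ k := map_pow Complex.ofRealHom.mapMatrix C k
  exact (C ^ k).l2_opNorm_le_l2_opNorm_map_ofReal.trans (hmap ▸ hpow k)

theorem exists_nat_mul_le_lt_succ_mul {x ω : ℝ} (hω : 0 < ω) (hx : 0 ≤ x) :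
    ∃ l : ℕ, l * ω ≤ x ∧ x < (l + 1) * ω :=
  ⟨⌊x / ω⌋₊, (le_div_iff₀ hω).mp (Nat.floor_le (div_nonneg hx hω.le)),
    (div_lt_iff₀ hω).mp (Nat.lt_floor_add_one _)⟩

theorem pow_le_inv_sq_mul_exp {ρ ω τ : ℝ} {k : ℕ} (hρ0 : 0 < ρ) (hρ1 : ρ < 1) (hω : 0 < ω)
    (hτ : τ < (k + 2) * ω) : ρ ^ k ≤ (ρ ^ 2)⁻¹ * Real.exp (-(Real.log ρ⁻¹ / ω) * τ) := by
  have hlog : Real.log ρ < 0 := Real.log_neg hρ0 hρ1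
  have hk : (τ / ω - 2) * Real.log ρ ≥ k * Real.log ρ := by
    refine mul_le_mul_of_nonpos_right ?_ hlog.le
    rw [sub_le_iff_le_add, div_le_iff₀ hω]
    linarith
  calc ρ ^ k = Real.exp (k * Real.log ρ) := by rw [Real.exp_nat_mul, Real.exp_log hρ0]
    _ ≤ Real.exp ((τ / ω - 2) * Real.log ρ) := Real.exp_le_exp.mpr hk
    _ = (ρ ^ 2)⁻¹ * Real.exp (-(Real.log ρ⁻¹ / ω) * τ) := by
      rw [Real.log_inv, ← Real.exp_log (pow_pos hρ0 2), ← Real.exp_neg, ← Real.exp_add,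
        Real.log_pow]
      congr 1
      field_simp
      ring

section PeriodicCocycle

variable {R : Type*} {U : ℝ → ℝ → R} {ω M : ℝ}

theorem cocycle_add_nat_mul
    (hper : ∀ s t : ℝ, 0 ≤ s → s ≤ t → U (t + ω) (s + ω) = U t s) (hω : 0 ≤ ω) (k : ℕ)
    {s t : ℝ} (hs : 0 ≤ s) (hst : s ≤ t) : U (t + k * ω) (s + k * ω) = U t s := by
  induction k with
  | zero => simp
  | succ k ih =>
    push_cast
    rw [add_one_mul, ← add_assoc, ← add_assoc,
      hper _ _ (by positivity) (by linarith), ih]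

theorem cocycle_nat_mul_eq_pow [Monoid R] (hid : ∀ t ≥ (0 : ℝ), U t t = 1)
    (hcoc : ∀ s r t : ℝ, 0 ≤ s → s ≤ r → r ≤ t → U t s = U t r * U r s)
    (hper : ∀ s t : ℝ, 0 ≤ s → s ≤ t → U (t + ω) (s + ω) = U t s) (hω : 0 ≤ ω) (j k : ℕ) :
    U ((j + k) * ω) (j * ω) = U ω 0 ^ k := by
  induction k with
  | zero => simpa using hid _ (by positivity)
  | succ k ih =>
    have hstep : U ((j + (k + 1)) * ω) ((j + k) * ω) = U ω 0 := by
      simpa [add_mul, add_comm, add_left_comm] using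
        cocycle_add_nat_mul hper hω (j + k) le_rfl hω
    push_cast
    rw [hcoc (j * ω) ((j + k) * ω) _ (by positivity) (by nlinarith) (by nlinarith), hstep, ih,
      pow_succ']

theorem norm_cocycle_le_of_mem_period [NormedRing R]
    (hper : ∀ s t : ℝ, 0 ≤ s → s ≤ t → U (t + ω) (s + ω) = U t s)
    (hbdd : ∀ s t : ℝ, 0 ≤ s → s ≤ t → t ≤ ω → ‖U t s‖ ≤ M) (hω : 0 ≤ ω) (j : ℕ) {s t : ℝ}
    (hs : j * ω ≤ s) (hst : s ≤ t) (ht : t ≤ (j + 1) * ω) : ‖U t s‖ ≤ M := by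
  have hshift := cocycle_add_nat_mul hper hω j (sub_nonneg.mpr hs) (sub_le_sub_right hst (j * ω))
  rw [sub_add_cancel, sub_add_cancel] at hshift
  rw [hshift]
  exact hbdd _ _ (sub_nonneg.mpr hs) (by linarith) (by linarith)

theorem exists_norm_cocycle_le_mul_pow [NormedRing R] (hid : ∀ t ≥ (0 : ℝ), U t t = 1)
    (hcoc : ∀ s r t : ℝ, 0 ≤ s → s ≤ r → r ≤ t → U t s = U t r * U r s)
    (hper : ∀ s t : ℝ, 0 ≤ s → s ≤ t → U (t + ω) (s + ω) = U t s)
    (hbdd : ∀ s t : ℝ, 0 ≤ s → s ≤ t → t ≤ ω → ‖U t s‖ ≤ M) (hω : 0 < ω) (hM : 0 ≤ M)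
    {c ρ : ℝ} (hc : 0 ≤ c) (hρ : 0 ≤ ρ) (hpow : ∀ k : ℕ, ‖U ω 0 ^ k‖ ≤ c * ρ ^ k)
    {s t : ℝ} (hs : 0 ≤ s) (hst : s ≤ t) :
    ∃ k : ℕ, t - s < (k + 2) * ω ∧ ‖U t s‖ ≤ (M + M ^ 2 * c) * ρ ^ k := by
  obtain ⟨j, hjs, hsj⟩ := exists_nat_mul_le_lt_succ_mul hω hs
  obtain ⟨l, hlt, htl⟩ := exists_nat_mul_le_lt_succ_mul hω (hs.trans hst)
  rcases lt_or_ge j l with hjl | hlj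
  · obtain ⟨k, rfl⟩ : ∃ k, l = j + 1 + k := ⟨l - (j + 1), by omega⟩
    push_cast at hlt htl
    refine ⟨k, by linarith, ?_⟩
    set a := ((j : ℝ) + 1) * ω
    set b := ((j : ℝ) + 1 + k) * ω
    have hab : a ≤ b := by nlinarith
    have hUba : U b a = U ω 0 ^ k := by
      simpa using cocycle_nat_mul_eq_pow hid hcoc hper hω.le (j + 1) k
    have hUta : ‖U t b‖ ≤ M := norm_cocycle_le_of_mem_period hper hbdd hω.le (j + 1 + k)
      (by push_cast; rfl) hlt (by push_cast; exact htl.le)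
    calc ‖U t s‖ = ‖U t b * (U b a * U a s)‖ := by
          rw [← hcoc s a b (by linarith) hsj.le hab, ← hcoc s b t hs (by linarith) hlt]
      _ ≤ M * (c * ρ ^ k * M) := by
          refine (norm_mul_le _ _).trans (mul_le_mul hUta ((norm_mul_le _ _).trans ?_)
            (by positivity) hM)
          rw [hUba]
          exact mul_le_mul (hpow k)
            (norm_cocycle_le_of_mem_period hper hbdd hω.le j hjs hsj.le le_rfl)
            (norm_nonneg _) (by positivity)
      _ ≤ (M + M ^ 2 * c) * ρ ^ k := by nlinarith [pow_nonneg hρ k]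
  · have hls : l * ω ≤ s := le_trans (by gcongr) hjs
    refine ⟨0, by push_cast; linarith, ?_⟩
    calc ‖U t s‖ ≤ M := norm_cocycle_le_of_mem_period hper hbdd hω.le l hls hst htl.le
      _ ≤ (M + M ^ 2 * c) * ρ ^ 0 := by
          rw [pow_zero, mul_one]
          exact le_add_of_nonneg_right (by positivity)

theorem exists_norm_cocycle_le_mul_exp [NormedRing R] (hid : ∀ t ≥ (0 : ℝ), U t t = 1)
    (hcoc : ∀ s r t : ℝ, 0 ≤ s → s ≤ r → r ≤ t → U t s = U t r * U r s)
    (hper : ∀ s t : ℝ, 0 ≤ s → s ≤ t → U (t + ω) (s + ω) = U t s)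
    (hbdd : ∀ s t : ℝ, 0 ≤ s → s ≤ t → t ≤ ω → ‖U t s‖ ≤ M) (hω : 0 < ω) (hM : 0 < M)
    {c ρ : ℝ} (hc : 0 ≤ c) (hρ0 : 0 < ρ) (hρ1 : ρ < 1) (hpow : ∀ k : ℕ, ‖U ω 0 ^ k‖ ≤ c * ρ ^ k) :
    ∃ K > (0 : ℝ), ∃ α > (0 : ℝ),
      ∀ s t : ℝ, 0 ≤ s → s ≤ t → ‖U t s‖ ≤ K * Real.exp (-α * (t - s)) := by
  refine ⟨(M + M ^ 2 * c) * (ρ ^ 2)⁻¹, by positivity, Real.log ρ⁻¹ / ω,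
    div_pos (Real.log_pos ((one_lt_inv₀ hρ0).mpr hρ1)) hω, fun s t hs hst => ?_⟩
  obtain ⟨k, hk, hUk⟩ :=
    exists_norm_cocycle_le_mul_pow hid hcoc hper hbdd hω hM.le hc hρ0.le hpow hs hst
  rw [mul_assoc]
  exact hUk.trans (mul_le_mul_of_nonneg_left (pow_le_inv_sq_mul_exp hρ0 hρ1 hω hk) (by positivity))

end PeriodicCocycle

/-- Floquet theory, sufficiency: if `U` is an `ω`-periodic cocycle, bounded on the window
`0 ≤ s ≤ t ≤ ω`, and every complex eigenvalue of the monodromy matrix `U(ω,0)` lies strictly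
inside the unit circle, then `U` admits a uniform exponential bound; in particular the trivial
solution is globally uniformly exponentially stable. -/
theorem stmt_6 (n : ℕ) (hn : 0 < n) (U : ℝ → ℝ → Matrix (Fin n) (Fin n) ℝ)
    (ω : ℝ) (hω : 0 < ω)
    (hid : ∀ t ≥ (0 : ℝ), U t t = 1)
    (hcoc : ∀ s r t : ℝ, 0 ≤ s → s ≤ r → r ≤ t → U t s = U t r * U r s)
    (hper : ∀ s t : ℝ, 0 ≤ s → s ≤ t → U (t + ω) (s + ω) = U t s)
    (M : ℝ) (hM : 0 < M)
    (hbdd : ∀ s t : ℝ, 0 ≤ s → s ≤ t → t ≤ ω → ‖U t s‖ ≤ M)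
    (heig : ∀ μ ∈ spectrum ℂ ((U ω 0).map ((↑) : ℝ → ℂ)), ‖μ‖ < 1) :
    ∃ K > (0 : ℝ), ∃ α > (0 : ℝ),
      (∀ s t : ℝ, 0 ≤ s → s ≤ t → ‖U t s‖ ≤ K * Real.exp (-α * (t - s))) ∧
      (∀ x₀ : EuclideanSpace ℝ (Fin n), ∀ s₀ ≥ (0 : ℝ), ∀ t ≥ s₀,
        ‖Matrix.toEuclideanLin (U t s₀) x₀‖ ≤ K * ‖x₀‖ * Real.exp (-α * (t - s₀))) := by
  have : Nonempty (Fin n) := ⟨⟨0, hn⟩⟩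
  obtain ⟨c, hc, ρ, hρ0, hρ1, hpow⟩ :=
    (U ω 0).exists_norm_pow_le_mul_pow_of_spectrum_map_ofReal heig
  obtain ⟨K, hK, α, hα, hdecay⟩ :=
    exists_norm_cocycle_le_mul_exp hid hcoc hper hbdd hω hM hc.le hρ0 hρ1 hpow
  refine ⟨K, hK, α, hα, hdecay, fun x₀ s₀ hs₀ t ht => ?_⟩
  calc ‖Matrix.toEuclideanLin (U t s₀) x₀‖ ≤ ‖U t s₀‖ * ‖x₀‖ := (U t s₀).l2_opNorm_mulVec x₀
    _ ≤ K * Real.exp (-α * (t - s₀)) * ‖x₀‖ := by gcongr; exact hdecay s₀ t hs₀ ht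
    _ = K * ‖x₀‖ * Real.exp (-α * (t - s₀)) := by ring
end

section
/- Let a : ℝ → ℝ be measurable with |a(t)| ≤ M for all t ≥ 0 and some M > 0, and let α > 0. Assume the average condition: for every ε > 0 there exists T > 0 such that for all 0 ≤ s ≤ t with t - s ≥ T one has ∫_s^t a(r) dr ≤ (-α + ε)(t - s). Then for every α' with 0 < α' < α there exists a constant K₀ ≥ 1 such that exp(∫_s^t a(r) dr) ≤ K₀ · e^{-α'(t-s)} for all 0 ≤ s ≤ t. -/
/-! A long interval gains the rate `-α'` from the average condition with `ε = α - α'`; on an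
interval shorter than that `T`, the bound `|a| ≤ M` costs at most `(M + α') T` compared to the
rate `-α'`. Hence `∫_s^t a ≤ (M + α') T - α' (t - s)` always, and `K₀ = exp ((M + α') T)`. -/

open Real

lemma intervalIntegral_le_mul_sub_of_abs_le {a : ℝ → ℝ} {M s t : ℝ} (hst : s ≤ t)
    (hbd : ∀ r ∈ Set.Ioc s t, |a r| ≤ M) : ∫ r in s..t, a r ≤ M * (t - s) := by
  have hnorm : ‖∫ r in s..t, a r‖ ≤ M * |t - s| :=
    intervalIntegral.norm_integral_le_of_norm_le_const fun r hr =>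
      hbd r (by rwa [Set.uIoc_of_le hst] at hr)
  rw [abs_of_nonneg (sub_nonneg.mpr hst)] at hnorm
  exact (le_abs_self _).trans hnorm

lemma intervalIntegral_le_const_sub_mul {a : ℝ → ℝ} {M α' T : ℝ} (hM : 0 ≤ M) (hα' : 0 < α')
    (hT : 0 < T) (hbd : ∀ t ≥ (0 : ℝ), |a t| ≤ M)
    (hlong : ∀ s t : ℝ, 0 ≤ s → s ≤ t → T ≤ t - s → ∫ r in s..t, a r ≤ -α' * (t - s))
    {s t : ℝ} (hs : 0 ≤ s) (hst : s ≤ t) :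
    ∫ r in s..t, a r ≤ (M + α') * T + -α' * (t - s) := by
  rcases le_or_gt T (t - s) with hge | hlt
  · have hC : 0 ≤ (M + α') * T := by positivity
    linarith [hlong s t hs hst hge]
  · have hshort : ∫ r in s..t, a r ≤ M * (t - s) :=
      intervalIntegral_le_mul_sub_of_abs_le hst fun r hr => hbd r (hs.trans hr.1.le)
    nlinarith

theorem stmt_10_general (a : ℝ → ℝ) (M α : ℝ)
    (hbd : ∀ t ≥ (0 : ℝ), |a t| ≤ M)
    (havg : ∀ ε > (0 : ℝ), ∃ T > (0 : ℝ), ∀ s t : ℝ, 0 ≤ s → s ≤ t → T ≤ t - s →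
      (∫ r in s..t, a r) ≤ (-α + ε) * (t - s)) :
    ∀ α' : ℝ, 0 < α' → α' < α → ∃ K₀ ≥ (1 : ℝ), ∀ s t : ℝ, 0 ≤ s → s ≤ t →
      Real.exp (∫ r in s..t, a r) ≤ K₀ * Real.exp (-α' * (t - s)) := by
  intro α' hα' hα'α
  have hM : 0 ≤ M := (abs_nonneg _).trans (hbd 0 le_rfl)
  obtain ⟨T, hT, hTavg⟩ := havg (α - α') (sub_pos.mpr hα'α)
  have hlong : ∀ s t : ℝ, 0 ≤ s → s ≤ t → T ≤ t - s → ∫ r in s..t, a r ≤ -α' * (t - s) :=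
    fun s t hs hst hge => (hTavg s t hs hst hge).trans_eq (by ring)
  refine ⟨exp ((M + α') * T), one_le_exp (by positivity), fun s t hs hst => ?_⟩
  rw [← exp_add]
  exact exp_le_exp.mpr (intervalIntegral_le_const_sub_mul hM hα' hT hbd hlong hs hst)

/-- If `a` is measurable, bounded by `M` on `[0,∞)`, and satisfies the Bohl-type average
condition with rate `-α`, then for every `0 < α' < α` there is `K₀ ≥ 1` with
`exp (∫_s^t a) ≤ K₀ e^{-α' (t-s)}` for all `0 ≤ s ≤ t`. -/
theorem stmt_10 (a : ℝ → ℝ) (M α : ℝ) (ha : Measurable a) (hM : 0 < M)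
    (hbd : ∀ t ≥ (0 : ℝ), |a t| ≤ M) (hα : 0 < α)
    (havg : ∀ ε > (0 : ℝ), ∃ T > (0 : ℝ), ∀ s t : ℝ, 0 ≤ s → s ≤ t → T ≤ t - s →
      (∫ r in s..t, a r) ≤ (-α + ε) * (t - s)) :
    ∀ α' : ℝ, 0 < α' → α' < α → ∃ K₀ ≥ (1 : ℝ), ∀ s t : ℝ, 0 ≤ s → s ≤ t →
      Real.exp (∫ r in s..t, a r) ≤ K₀ * Real.exp (-α' * (t - s)) :=
  stmt_10_general a M α hbd havg
end

section
/- Assume that a is Lebesgue integrable on [0,+∞) and that the series ∑_k |ln|1 + b_k|| is summable. Then there exists a constant C > 0 such that |u(t,s)| ≤ C for all t ≥ s ≥ 0; consequently the trivial solution of the corresponding scalar homogeneous generalized linear differential equation is uniformly stable. -/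
/-!
Since `a` is integrable on `[0, ∞)`, every `∫_s^t a` is at most `A = ∫_0^∞ |a|`. Since
`τ_k → ∞`, only finitely many jumps lie in `[s, t)`, and writing `|1 + b_k| = exp (ln |1 + b_k|)`
bounds the absolute value of their product by `exp B` with `B = ∑_k |ln |1 + b_k||`.
Hence `|u(t,s)| ≤ exp (A + B)`, and a uniform bound on `u` is uniform stability.
-/

/-- The transition function of the scalar impulsive equation `x' = a(t)x`, `Δ⁺x(τ_k) = b_k x(τ_k)`
(equivalently, of the corresponding scalar homogeneous generalized linear differential
equation): `u(t,s) = exp(∫_s^t a) · ∏_{k : τ_k ∈ [s,t)} (1 + b_k)`. -/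
noncomputable def transition (a : ℝ → ℝ) (τ b : ℕ → ℝ) (t s : ℝ) : ℝ :=
  Real.exp (∫ r in s..t, a r) * ∏ᶠ k ∈ {k : ℕ | s ≤ τ k ∧ τ k < t}, (1 + b k)

open MeasureTheory Filter Set

theorem intervalIntegral_le_integral_abs_Ici {f : ℝ → ℝ} {c s t : ℝ}
    (hf : IntegrableOn f (Ici c)) (hcs : c ≤ s) (hst : s ≤ t) :
    ∫ r in s..t, f r ≤ ∫ r in Ici c, |f r| := by
  have hsub : Ioc s t ⊆ Ici c := fun r hr => hcs.trans hr.1.le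
  have hIoc : IntegrableOn f (Ioc s t) := hf.mono_set hsub
  rw [intervalIntegral.integral_of_le hst]
  calc ∫ r in Ioc s t, f r ≤ ∫ r in Ioc s t, |f r| :=
        integral_mono hIoc hIoc.abs fun r => le_abs_self _
    _ ≤ ∫ r in Ici c, |f r| :=
        setIntegral_mono_set hf.abs (.of_forall fun r => abs_nonneg _) (.of_forall hsub)

theorem abs_prod_le_exp_tsum_abs_log {ι : Type*} {f : ι → ℝ} (hf : ∀ i, f i ≠ 0)
    (hsum : Summable fun i => |Real.log (|f i|)|) (s : Finset ι) :
    |∏ i ∈ s, f i| ≤ Real.exp (∑' i, |Real.log (|f i|)|) := by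
  have hexp : ∀ i ∈ s, |f i| = Real.exp (Real.log (|f i|)) := fun i _ =>
    (Real.exp_log (abs_pos.mpr (hf i))).symm
  rw [Finset.abs_prod, Finset.prod_congr rfl hexp, ← Real.exp_sum, Real.exp_le_exp]
  calc ∑ i ∈ s, Real.log (|f i|) ≤ ∑ i ∈ s, |Real.log (|f i|)| :=
        Finset.sum_le_sum fun i _ => le_abs_self _
    _ ≤ ∑' i, |Real.log (|f i|)| := hsum.sum_le_tsum _ fun i _ => abs_nonneg _

theorem finite_setOf_lt_of_tendsto_atTop {τ : ℕ → ℝ} (hτ : Tendsto τ atTop atTop) (t : ℝ) :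
    {k | τ k < t}.Finite := by
  have h := hτ.eventually_ge_atTop t
  rw [← Nat.cofinite_eq_atTop, eventually_cofinite] at h
  simpa only [not_le] using h

theorem abs_transition_le {a : ℝ → ℝ} {τ b : ℕ → ℝ} (hτ : Tendsto τ atTop atTop)
    (hb : ∀ k, 1 + b k ≠ 0) (hint : IntegrableOn a (Ici 0))
    (hsum : Summable fun k => |Real.log (|1 + b k|)|) {s t : ℝ} (hs : 0 ≤ s) (hst : s ≤ t) :
    |transition a τ b t s| ≤
      Real.exp ((∫ r in Ici 0, |a r|) + ∑' k, |Real.log (|1 + b k|)|) := by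
  have hjumps : {k | s ≤ τ k ∧ τ k < t}.Finite :=
    (finite_setOf_lt_of_tendsto_atTop hτ t).subset fun k hk => hk.2
  rw [transition, abs_mul, Real.abs_exp, Real.exp_add,
    finprod_mem_eq_finite_toFinset_prod _ hjumps]
  exact mul_le_mul (Real.exp_le_exp.mpr (intervalIntegral_le_integral_abs_Ici hint hs hst))
    (abs_prod_le_exp_tsum_abs_log hb hsum _) (abs_nonneg _) (Real.exp_pos _).le

theorem uniformStability_of_abs_le {u : ℝ → ℝ → ℝ} {C : ℝ} (hC : 0 < C)
    (hu : ∀ s t : ℝ, 0 ≤ s → s ≤ t → |u t s| ≤ C) :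
    ∀ ε > (0 : ℝ), ∃ δ > (0 : ℝ), ∀ s₀ ≥ (0 : ℝ), ∀ x₀ : ℝ, |x₀| < δ →
      ∀ t ≥ s₀, |u t s₀ * x₀| < ε := by
  intro ε hε
  refine ⟨ε / C, div_pos hε hC, fun s₀ hs₀ x₀ hx₀ t ht => ?_⟩
  calc |u t s₀ * x₀| = |u t s₀| * |x₀| := abs_mul _ _
    _ ≤ C * |x₀| := mul_le_mul_of_nonneg_right (hu s₀ t hs₀ ht) (abs_nonneg _)
    _ < C * (ε / C) := (mul_lt_mul_iff_right₀ hC).mpr hx₀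
    _ = ε := mul_div_cancel₀ _ hC.ne'

theorem stmt_11_general (a : ℝ → ℝ) (τ b : ℕ → ℝ)
    (hτtop : Filter.Tendsto τ Filter.atTop Filter.atTop)
    (hb : ∀ k, 1 + b k ≠ 0)
    (hint : MeasureTheory.IntegrableOn a (Set.Ici 0))
    (hsum : Summable fun k => |Real.log (|1 + b k|)|) :
    (∃ C > (0 : ℝ), ∀ s t : ℝ, 0 ≤ s → s ≤ t → |transition a τ b t s| ≤ C) ∧
    (∀ ε > (0 : ℝ), ∃ δ > (0 : ℝ), ∀ s₀ ≥ (0 : ℝ), ∀ x₀ : ℝ, |x₀| < δ →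
      ∀ t ≥ s₀, |transition a τ b t s₀ * x₀| < ε) := by
  have hbound : ∀ s t : ℝ, 0 ≤ s → s ≤ t → |transition a τ b t s| ≤ _ :=
    fun s t hs hst => abs_transition_le hτtop hb hint hsum hs hst
  exact ⟨⟨_, Real.exp_pos _, hbound⟩, uniformStability_of_abs_le (Real.exp_pos _) hbound⟩

/-- If `a` is Lebesgue integrable on `[0,∞)` and `∑_k |ln|1+b_k||` is summable, then the
transition function is uniformly bounded; consequently the trivial solution of the
corresponding scalar homogeneous GLDE is uniformly stable. -/
theorem stmt_11 (a : ℝ → ℝ) (τ b : ℕ → ℝ)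
    (hτmono : StrictMono τ) (hτpos : ∀ k, 0 < τ k)
    (hτtop : Filter.Tendsto τ Filter.atTop Filter.atTop)
    (hb : ∀ k, 1 + b k ≠ 0)
    (hint : MeasureTheory.IntegrableOn a (Set.Ici 0))
    (hsum : Summable fun k => |Real.log (|1 + b k|)|) :
    (∃ C > (0 : ℝ), ∀ s t : ℝ, 0 ≤ s → s ≤ t → |transition a τ b t s| ≤ C) ∧
    (∀ ε > (0 : ℝ), ∃ δ > (0 : ℝ), ∀ s₀ ≥ (0 : ℝ), ∀ x₀ : ℝ, |x₀| < δ →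
      ∀ t ≥ s₀, |transition a τ b t s₀ * x₀| < ε) :=
  stmt_11_general a τ b hτtop hb hint hsum
end
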